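/- Let φ : [1,∞) → (0,∞) be continuous and differentiable, n ≥ 2, λ ≠ 0, and let ψ be a positive, nondecreasing solution of ψ'' + (n-1)(φ'/φ)ψ' − (λ²/φ²)ψ = 0 on [1,∞). If ∫₁^∞ φ(τ)^{1-n} dτ < ∞ and ∫₁^∞ φ(τ)^{1-n} ∫₁^τ φ(σ)^{n-3} dσ dτ < ∞, then ψ is bounded on [1,∞). -/

import Mathlib

open MeasureTheory Set

theorem radial_solution_bounded_of_march (n : ℕ) (hn : 2 ≤ n) (lam : ℝ) (hlam : lam ≠ 0)
    (φ φ' : ℝ → ℝ) (hφc : ContinuousOn φ (Ici 1)) (hφpos : ∀ s ≥ (1:ℝ), 0 < φ s)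
    (hφd : ∀ s ≥ (1:ℝ), HasDerivAt φ (φ' s) s)
    (ψ ψ' ψ'' : ℝ → ℝ) (hψpos : ∀ s ≥ (1:ℝ), 0 < ψ s)
    (hψmono : MonotoneOn ψ (Ici 1))
    (hψd : ∀ s ≥ (1:ℝ), HasDerivAt ψ (ψ' s) s)
    (hψdd : ∀ s ≥ (1:ℝ), HasDerivAt ψ' (ψ'' s) s)
    (hode : ∀ s ≥ (1:ℝ),
      ψ'' s + ((n : ℝ) - 1) * (φ' s / φ s) * ψ' s - lam ^ 2 / φ s ^ 2 * ψ s = 0)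
    (h1 : (∫⁻ τ in Ioi (1:ℝ), ENNReal.ofReal (φ τ ^ ((1 : ℝ) - n))) < ⊤)
    (h2 : (∫⁻ τ in Ioi (1:ℝ), ENNReal.ofReal
        (φ τ ^ ((1 : ℝ) - n) * ∫ σ in (1:ℝ)..τ, φ σ ^ ((n : ℝ) - 3))) < ⊤) :
    ∃ M : ℝ, ∀ s ≥ (1:ℝ), ψ s ≤ M := by
  have hlam2 : (0:ℝ) < lam ^ 2 := by positivity
  set c1 : ℝ := (n:ℝ) - 1 with hc1
  set c3 : ℝ := (n:ℝ) - 3 with hc3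
  -- continuity facts
  have hψc : ContinuousOn ψ (Ici 1) := fun t ht => (hψd t ht).continuousAt.continuousWithinAt
  have hψ'c : ContinuousOn ψ' (Ici 1) := fun t ht => (hψdd t ht).continuousAt.continuousWithinAt
  have hφne : ∀ t ∈ Ici (1:ℝ), φ t ≠ 0 := fun t ht => (hφpos t ht).ne'
  have hrpowc : ∀ c : ℝ, ContinuousOn (fun t => φ t ^ c) (Ici 1) := fun c =>
    hφc.rpow_const (fun t ht => Or.inl (hφne t ht))
  -- ψ' is nonnegative on [1, ∞)
  have hψ'nonneg : ∀ t ≥ (1:ℝ), 0 ≤ ψ' t := by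
    intro t ht
    have hd := (hψd t ht).hasDerivWithinAt (s := Ioi t)
    rw [hasDerivWithinAt_iff_tendsto_slope] at hd
    have hset : Ioi t \ {t} = Ioi t := diff_singleton_eq_self (by simp)
    rw [hset] at hd
    refine ge_of_tendsto hd ?_
    filter_upwards [self_mem_nhdsWithin] with u hu
    have h1u : (1:ℝ) ≤ u := le_trans ht (le_of_lt hu)
    have hmono := hψmono (mem_Ici.mpr ht) (mem_Ici.mpr h1u) (le_of_lt hu)
    rw [slope_def_field]
    exact div_nonneg (by linarith) (by linarith [mem_Ioi.mp hu])
  -- the function x and its derivative bound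
  set xf : ℝ → ℝ := fun t => φ t ^ c1 * ψ' t / (lam ^ 2 * ψ t) with hxf
  have hxnonneg : ∀ t ≥ (1:ℝ), 0 ≤ xf t := by
    intro t ht
    have h1 := (Real.rpow_pos_of_pos (hφpos t ht) c1).le
    have h2 := hψ'nonneg t ht
    have h3 := (hψpos t ht).le
    positivity
  -- y = φ^{n-1} ψ' has derivative lam² φ^{n-3} ψ
  have hyd : ∀ t ≥ (1:ℝ), HasDerivAt (fun u => φ u ^ c1 * ψ' u)
      (lam ^ 2 * (φ t ^ c3 * ψ t)) t := by
    intro t ht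
    have hp := hφpos t ht
    have hpow : HasDerivAt (fun u => φ u ^ c1) (φ' t * c1 * φ t ^ (c1 - 1)) t :=
      (hφd t ht).rpow_const (Or.inl hp.ne')
    have hmul := hpow.mul (hψdd t ht)
    refine hmul.congr_deriv (Eq.symm ?_)
    have hode' := hode t ht
    have e1 : φ t ^ (c1 - 1) = φ t ^ c1 / φ t := by
      rw [Real.rpow_sub hp, Real.rpow_one]
    have e2 : φ t ^ c3 = φ t ^ c1 / φ t ^ 2 := by
      rw [hc3, hc1, show (n:ℝ) - 3 = ((n:ℝ) - 1) - 2 by ring, Real.rpow_sub hp,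
        show ((2:ℝ)) = ((2:ℕ):ℝ) by norm_num, Real.rpow_natCast]
    have hψ'' : ψ'' t = lam ^ 2 / φ t ^ 2 * ψ t - ((n:ℝ) - 1) * (φ' t / φ t) * ψ' t := by
      linarith
    rw [e2, e1, hψ'', hc1]
    field_simp
    ring
  -- derivative of x
  have hxd : ∀ t ≥ (1:ℝ), HasDerivAt xf
      (φ t ^ c3 - φ t ^ c1 * ψ' t ^ 2 / (lam ^ 2 * ψ t ^ 2)) t := by
    intro t ht
    have hψt := hψpos t ht
    have hden : lam ^ 2 * ψ t ≠ 0 := by positivity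
    have hdend : HasDerivAt (fun u => lam ^ 2 * ψ u) (lam ^ 2 * ψ' t) t :=
      (hψd t ht).const_mul _
    have hdiv := (hyd t ht).div hdend hden
    refine hdiv.congr_deriv (Eq.symm ?_)
    have hψne : ψ t ≠ 0 := hψt.ne'
    field_simp
  -- I t = ∫₁^t φ^{n-3}
  set If : ℝ → ℝ := fun t => ∫ σ in (1:ℝ)..t, φ σ ^ c3 with hIf
  have hInonneg : ∀ t ≥ (1:ℝ), 0 ≤ If t := by
    intro t ht
    apply intervalIntegral.integral_nonneg ht
    intro u hu
    exact (Real.rpow_pos_of_pos (hφpos u hu.1) c3).le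
  have hIcont : ContinuousOn If (Ici 1) := by
    intro t ht
    have h1t : (1:ℝ) ≤ t := ht
    have huIcc : uIcc (1:ℝ) (t+1) = Icc 1 (t+1) := uIcc_of_le (by linarith)
    have hint : IntegrableOn (fun σ => φ σ ^ c3) (uIcc 1 (t+1)) := by
      rw [huIcc]
      exact (((hrpowc c3).mono (Icc_subset_Ici_self)).integrableOn_compact isCompact_Icc)
    have hcont := intervalIntegral.continuousOn_primitive_interval hint
    rw [huIcc] at hcont
    have hmem : t ∈ Icc (1:ℝ) (t+1) := ⟨h1t, by linarith⟩
    refine (hcont t hmem).mono_of_mem_nhdsWithin ?_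
    have hsub : Ici (1:ℝ) ∩ Iio (t+1) ⊆ Icc 1 (t+1) := fun u hu => ⟨hu.1, le_of_lt hu.2⟩
    exact Filter.mem_of_superset (inter_mem_nhdsWithin _ (Iio_mem_nhds (lt_add_one t))) hsub
  -- bound: xf t ≤ xf 1 + If t
  have hxbound : ∀ t ≥ (1:ℝ), xf t ≤ xf 1 + If t := by
    intro t ht
    have hsub : Icc (1:ℝ) t ⊆ Ici 1 := Icc_subset_Ici_self
    have huIcc : uIcc (1:ℝ) t = Icc 1 t := uIcc_of_le ht
    have hx'c : ContinuousOn
        (fun u => φ u ^ c3 - φ u ^ c1 * ψ' u ^ 2 / (lam ^ 2 * ψ u ^ 2)) (Icc 1 t) := by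
      refine ContinuousOn.sub ((hrpowc c3).mono hsub) ?_
      refine ContinuousOn.div (((hrpowc c1).mono hsub).mul ((hψ'c.mono hsub).pow 2))
        (continuousOn_const.mul ((hψc.mono hsub).pow 2)) ?_
      intro u hu
      have := hψpos u (hsub hu)
      positivity
    have hint1 : IntervalIntegrable
        (fun u => φ u ^ c3 - φ u ^ c1 * ψ' u ^ 2 / (lam ^ 2 * ψ u ^ 2)) volume 1 t := by
      apply ContinuousOn.intervalIntegrable
      rwa [huIcc]
    have hint2 : IntervalIntegrable (fun u => φ u ^ c3) volume 1 t := by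
      apply ContinuousOn.intervalIntegrable
      rw [huIcc]
      exact (hrpowc c3).mono hsub
    have hftc := intervalIntegral.integral_eq_sub_of_hasDerivAt
      (f := xf) (f' := fun u => φ u ^ c3 - φ u ^ c1 * ψ' u ^ 2 / (lam ^ 2 * ψ u ^ 2))
      (fun u hu => hxd u (by rw [huIcc] at hu; exact hu.1)) hint1
    have hmono := intervalIntegral.integral_mono_on ht hint1 hint2 (fun u hu => by
      have hu1 : (1:ℝ) ≤ u := hu.1
      have h1 := (Real.rpow_pos_of_pos (hφpos u hu1) c1).le
      have h2 := hψpos u hu1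
      have : 0 ≤ φ u ^ c1 * ψ' u ^ 2 / (lam ^ 2 * ψ u ^ 2) := by positivity
      linarith)
    rw [hftc] at hmono
    have : If t = ∫ σ in (1:ℝ)..t, φ σ ^ c3 := rfl
    linarith [hmono]
  -- pointwise logarithmic-derivative bound
  set A : ℝ := xf 1 with hA
  have hAnonneg : 0 ≤ A := hxnonneg 1 le_rfl
  set hf : ℝ → ℝ := fun t => lam ^ 2 * φ t ^ ((1:ℝ) - n) * (A + If t) with hhf
  have hfnonneg : ∀ t ≥ (1:ℝ), 0 ≤ hf t := by
    intro t ht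
    have h1 := (Real.rpow_pos_of_pos (hφpos t ht) ((1:ℝ) - n)).le
    have h2 := hInonneg t ht
    positivity
  have hlogder : ∀ t ≥ (1:ℝ), ψ' t / ψ t ≤ hf t := by
    intro t ht
    have hp := hφpos t ht
    have hψt := hψpos t ht
    have hkey : ψ' t / ψ t = lam ^ 2 * φ t ^ ((1:ℝ) - n) * xf t := by
      have e : φ t ^ ((1:ℝ) - n) = (φ t ^ c1)⁻¹ := by
        rw [show ((1:ℝ) - n) = -c1 by rw [hc1]; ring, Real.rpow_neg hp.le]
      rw [e, hxf]
      have hne : φ t ^ c1 ≠ 0 := (Real.rpow_pos_of_pos hp c1).ne'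
      field_simp
    rw [hkey, hhf]
    have hnn : 0 ≤ lam ^ 2 * φ t ^ ((1:ℝ) - n) := by
      have := (Real.rpow_pos_of_pos hp ((1:ℝ) - n)).le
      positivity
    exact mul_le_mul_of_nonneg_left (hxbound t ht) hnn
  -- integrability of hf on Ioi 1
  have hrestr : (volume : Measure ℝ).restrict (Ioi 1) ≤ (volume : Measure ℝ).restrict (Ici 1) :=
    Measure.restrict_mono Ioi_subset_Ici_self le_rfl
  have hmeas1 : AEStronglyMeasurable (fun t => φ t ^ ((1:ℝ) - n))
      ((volume : Measure ℝ).restrict (Ioi 1)) :=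
    ((hrpowc ((1:ℝ) - n)).aestronglyMeasurable measurableSet_Ici).mono_measure hrestr
  have hmeasI : AEStronglyMeasurable If ((volume : Measure ℝ).restrict (Ioi 1)) :=
    (hIcont.aestronglyMeasurable measurableSet_Ici).mono_measure hrestr
  have hf1int : IntegrableOn (fun t => φ t ^ ((1:ℝ) - n)) (Ioi 1) := by
    refine ⟨hmeas1, ?_⟩
    rw [hasFiniteIntegral_iff_ofReal]
    · exact h1
    · filter_upwards [ae_restrict_mem measurableSet_Ioi] with t ht
      exact (Real.rpow_pos_of_pos (hφpos t (le_of_lt ht)) _).le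
  have hf2int : IntegrableOn (fun t => φ t ^ ((1:ℝ) - n) * If t) (Ioi 1) := by
    refine ⟨hmeas1.mul hmeasI, ?_⟩
    rw [hasFiniteIntegral_iff_ofReal]
    · exact h2
    · filter_upwards [ae_restrict_mem measurableSet_Ioi] with t ht
      exact mul_nonneg (Real.rpow_pos_of_pos (hφpos t (le_of_lt ht)) _).le
        (hInonneg t (le_of_lt ht))
  have hfint : IntegrableOn hf (Ioi 1) := by
    have : hf = fun t => (lam ^ 2 * A) * (φ t ^ ((1:ℝ) - n))
        + lam ^ 2 * (φ t ^ ((1:ℝ) - n) * If t) := by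
      funext t; rw [hhf]; ring
    rw [this]
    exact (hf1int.const_mul _).add (hf2int.const_mul _)
  set B : ℝ := ∫ t in Ioi (1:ℝ), hf t with hB
  -- main bound
  refine ⟨ψ 1 * Real.exp B, fun s hs => ?_⟩
  have hsub : Icc (1:ℝ) s ⊆ Ici 1 := Icc_subset_Ici_self
  have huIcc : uIcc (1:ℝ) s = Icc 1 s := uIcc_of_le hs
  have hratc : ContinuousOn (fun t => ψ' t / ψ t) (Icc 1 s) :=
    (hψ'c.mono hsub).div (hψc.mono hsub) (fun t ht => (hψpos t (hsub ht)).ne')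
  have hintr : IntervalIntegrable (fun t => ψ' t / ψ t) volume 1 s := by
    apply ContinuousOn.intervalIntegrable; rwa [huIcc]
  have hinth : IntervalIntegrable hf volume 1 s := by
    apply ContinuousOn.intervalIntegrable
    rw [huIcc, hhf]
    refine (continuousOn_const.mul ((hrpowc ((1:ℝ) - n)).mono hsub)).mul ?_
    exact continuousOn_const.add (hIcont.mono hsub)
  have hftc : ∫ t in (1:ℝ)..s, ψ' t / ψ t = Real.log (ψ s) - Real.log (ψ 1) := by
    refine intervalIntegral.integral_eq_sub_of_hasDerivAt
      (f := fun t => Real.log (ψ t)) (fun t ht => ?_) hintr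
    rw [huIcc] at ht
    exact (hψd t ht.1).log (hψpos t ht.1).ne'
  have hle1 : ∫ t in (1:ℝ)..s, ψ' t / ψ t ≤ ∫ t in (1:ℝ)..s, hf t :=
    intervalIntegral.integral_mono_on hs hintr hinth (fun t ht => hlogder t ht.1)
  have hle2 : ∫ t in (1:ℝ)..s, hf t ≤ B := by
    rw [intervalIntegral.integral_of_le hs, hB]
    refine setIntegral_mono_set hfint ?_ (HasSubset.Subset.eventuallyLE Ioc_subset_Ioi_self)
    filter_upwards [ae_restrict_mem measurableSet_Ioi] with t ht
    exact hfnonneg t (le_of_lt ht)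
  have hlog : Real.log (ψ s) ≤ Real.log (ψ 1) + B := by
    linarith [hftc, hle1, hle2]
  have := Real.exp_le_exp.mpr hlog
  rwa [Real.exp_log (hψpos s hs), Real.exp_add, Real.exp_log (hψpos 1 le_rfl)] at this
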